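/- Let (A,·) be a commutative (not necessarily associative) algebra and ψ a skew-symmetric bilinear map. Define the Hochschild coboundary δ_H ψ(X,Y,Z) = Xψ(Y,Z) − ψ(XY,Z) + ψ(X,YZ) − ψ(X,Y)Z, and the weakly associative coboundary δ_WA ψ(X,Y,Z) = δ_H ψ(X,Y,Z) + δ_H ψ(Y,Z,X) − δ_H ψ(Y,X,Z). Then with L(ψ)(X,Y,Z) = ψ(XY,Z) − Xψ(Y,Z) − ψ(X,Z)Y, one has δ_WA ψ(X,Y,Z) = −2 L(ψ)(Y,Z,X) for all X,Y,Z. In particular δ_WA ψ = 0 if and only if ψ satisfies the Leibniz identity. -/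
import Mathlib


variable {K A : Type*} [Field K] [CharZero K] [AddCommGroup A] [Module K A]

/-- The Hochschild coboundary of a bilinear map `ψ` with respect to `m`. -/
def deltaH (m ψ : A →ₗ[K] A →ₗ[K] A) (X Y Z : A) : A :=
  m X (ψ Y Z) - ψ (m X Y) Z + ψ X (m Y Z) - m (ψ X Y) Z

/-- The weakly associative coboundary. -/
def deltaWA (m ψ : A →ₗ[K] A →ₗ[K] A) (X Y Z : A) : A :=
  deltaH m ψ X Y Z + deltaH m ψ Y Z X - deltaH m ψ Y X Z

/-- The Leibniz defect. -/
def leib (m ψ : A →ₗ[K] A →ₗ[K] A) (X Y Z : A) : A :=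
  ψ (m X Y) Z - m X (ψ Y Z) - m (ψ X Z) Y

theorem deltaWA_eq_neg_two_leib (m ψ : A →ₗ[K] A →ₗ[K] A)
    (hcomm : ∀ X Y : A, m X Y = m Y X)
    (hskew : ∀ X Y : A, ψ X Y = -ψ Y X) :
    (∀ X Y Z : A, deltaWA m ψ X Y Z = -((2 : K) • leib m ψ Y Z X)) ∧
    ((∀ X Y Z : A, deltaWA m ψ X Y Z = 0) ↔ (∀ X Y Z : A, leib m ψ X Y Z = 0)) := by
  have key : ∀ X Y Z : A, deltaWA m ψ X Y Z = -((2 : K) • leib m ψ Y Z X) := by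
    intro X Y Z
    simp only [deltaWA, deltaH, leib, two_smul]
    rw [hcomm Y X, hcomm Z X, hskew X (m Y Z), hskew X Z, hskew X Y, hcomm X (ψ Y Z)]
    simp only [map_neg, LinearMap.neg_apply, neg_neg]
    abel
  refine ⟨key, ⟨fun h X Y Z => ?_, fun h X Y Z => by rw [key, h, smul_zero, neg_zero]⟩⟩
  have := key Z X Y
  rw [h] at this
  have h2 : (2 : K) • leib m ψ X Y Z = 0 := by simpa using this.symm
  exact (smul_eq_zero.mp h2).resolve_left two_ne_zero
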